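/- (Pullback of a 2-form by the flow solves Lie advection) Let u be a smooth divergence-free velocity field with backward flow map X_{[t,0]} on ℝ³ (fields invariant in e₃), and let B₀ be a smooth divergence-free vector field. Then B(x,t) := adj(DX_{[t,0]}(x)) · B₀(X_{[t,0]}(x)) solves ∂_t B + ∇×(B × u) = 0 with B(·,0) = B₀, where adj denotes the adjugate of the Jacobian matrix. -/

import Mathlib

open Real Function Matrix

/-- partial derivative in direction `j` of a scalar function on `ℝ³` -/
noncomputable def pd3 (j : Fin 3) (g : (Fin 3 → ℝ) → ℝ) (x : Fin 3 → ℝ) : ℝ :=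
  fderiv ℝ g x (Pi.single j 1)

/-- cross product on `ℝ³` -/
def cross3 (a b : Fin 3 → ℝ) : Fin 3 → ℝ :=
  ![a 1 * b 2 - a 2 * b 1, a 2 * b 0 - a 0 * b 2, a 0 * b 1 - a 1 * b 0]

/-- curl of a vector field on `ℝ³` -/
noncomputable def curl3 (F : (Fin 3 → ℝ) → (Fin 3 → ℝ)) (x : Fin 3 → ℝ) : Fin 3 → ℝ :=
  ![pd3 1 (fun y => F y 2) x - pd3 2 (fun y => F y 1) x,
    pd3 2 (fun y => F y 0) x - pd3 0 (fun y => F y 2) x,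
    pd3 0 (fun y => F y 1) x - pd3 1 (fun y => F y 0) x]

/-- divergence of a vector field on `ℝ³` -/
noncomputable def div3 (F : (Fin 3 → ℝ) → (Fin 3 → ℝ)) (x : Fin 3 → ℝ) : ℝ :=
  ∑ i, pd3 i (fun y => F y i) x

/-- Jacobian matrix `DX` of a map `X : ℝ³ → ℝ³` -/
noncomputable def jac3 (X : (Fin 3 → ℝ) → (Fin 3 → ℝ)) (x : Fin 3 → ℝ) :
    Matrix (Fin 3) (Fin 3) ℝ :=
  Matrix.of fun i j => fderiv ℝ (fun y => X y i) x (Pi.single j 1)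



variable {W₁ W₂ : Type*} [NormedAddCommGroup W₁] [NormedSpace ℝ W₁]
  [NormedAddCommGroup W₂] [NormedSpace ℝ W₂]

/-- spatial slice partial derivative -/
lemma fderiv_slice_right {F : W₁ × W₂ → ℝ} (a : W₁) (b v : W₂) (hF : DifferentiableAt ℝ F (a, b)) :
    fderiv ℝ (fun y => F (a, y)) b v = fderiv ℝ F (a, b) (0, v) := by
  have h1 : HasFDerivAt (fun y : W₂ => (a, y)) ((ContinuousLinearMap.inr ℝ W₁ W₂)) b :=
    HasFDerivAt.prodMk (hasFDerivAt_const a b) (hasFDerivAt_id b)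
  have h2 : HasFDerivAt (fun y => F (a, y))
      ((fderiv ℝ F (a, b)).comp (ContinuousLinearMap.inr ℝ W₁ W₂)) b := hF.hasFDerivAt.comp b h1
  rw [h2.fderiv]; rfl

lemma fderiv_slice_left {F : W₁ × W₂ → ℝ} (a : W₁) (b : W₂) (w : W₁) (hF : DifferentiableAt ℝ F (a, b)) :
    fderiv ℝ (fun s => F (s, b)) a w = fderiv ℝ F (a, b) (w, 0) := by
  have h1 : HasFDerivAt (fun s : W₁ => (s, b)) ((ContinuousLinearMap.inl ℝ W₁ W₂)) a :=
    HasFDerivAt.prodMk (hasFDerivAt_id a) (hasFDerivAt_const b a)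
  have h2 : HasFDerivAt (fun s => F (s, b))
      ((fderiv ℝ F (a, b)).comp (ContinuousLinearMap.inl ℝ W₁ W₂)) a := hF.hasFDerivAt.comp a h1
  rw [h2.fderiv]; rfl

/-- symmetry of mixed second derivatives for smooth functions -/
lemma fderiv_swap {F : W₁ → ℝ} (hF : ContDiff ℝ (⊤ : ℕ∞) F) (q : W₁) (aa bb : W₁) :
    fderiv ℝ (fun p => fderiv ℝ F p aa) q bb = fderiv ℝ (fun p => fderiv ℝ F p bb) q aa := by
  have hd : ∀ y, HasFDerivAt F (fderiv ℝ F y) y := fun y =>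
    (hF.differentiable (by simp) y).hasFDerivAt
  have hd2 : DifferentiableAt ℝ (fderiv ℝ F) q := by
    have := (hF.fderiv_right (m := (⊤ : ℕ∞)) (by simp)).differentiable (by simp)
    exact this q
  have hsym := second_derivative_symmetric hd hd2.hasFDerivAt aa bb
  have e1 : fderiv ℝ (fun p => fderiv ℝ F p aa) q bb = fderiv ℝ (fderiv ℝ F) q bb aa := by
    have h1 : HasFDerivAt (fun p => fderiv ℝ F p aa)
        ((ContinuousLinearMap.apply ℝ ℝ aa).comp (fderiv ℝ (fderiv ℝ F) q)) q :=
      (ContinuousLinearMap.apply ℝ ℝ aa).hasFDerivAt.comp q hd2.hasFDerivAt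
    rw [h1.fderiv]; rfl
  have e2 : fderiv ℝ (fun p => fderiv ℝ F p bb) q aa = fderiv ℝ (fderiv ℝ F) q aa bb := by
    have h1 : HasFDerivAt (fun p => fderiv ℝ F p bb)
        ((ContinuousLinearMap.apply ℝ ℝ bb).comp (fderiv ℝ (fderiv ℝ F) q)) q :=
      (ContinuousLinearMap.apply ℝ ℝ bb).hasFDerivAt.comp q hd2.hasFDerivAt
    rw [h1.fderiv]; rfl
  rw [e1, e2]
  exact (second_derivative_symmetric hd hd2.hasFDerivAt bb aa)

/-- CLM expansion on `Fin 3 → ℝ` -/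
lemma clm_expand (φ : (Fin 3 → ℝ) →L[ℝ] ℝ) (w : Fin 3 → ℝ) :
    φ w = ∑ m, w m * φ (Pi.single m 1) := by
  have : w = ∑ m, w m • (Pi.single m 1 : Fin 3 → ℝ) := by
    funext j
    simp [Finset.sum_apply, Pi.single_apply]
  calc φ w = φ (∑ m, w m • (Pi.single m 1 : Fin 3 → ℝ)) := by rw [← this]
    _ = ∑ m, w m * φ (Pi.single m 1) := by rw [map_sum]; simp


noncomputable def Fk (X : ℝ → (Fin 3 → ℝ) → (Fin 3 → ℝ)) (k : Fin 3) :
    ℝ × (Fin 3 → ℝ) → ℝ := fun p => X p.1 p.2 k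

lemma adjmul0 (M : Matrix (Fin 3) (Fin 3) ℝ) (w : Fin 3 → ℝ) :
    (Matrix.adjugate M).mulVec w 0 =
      (M 1 1 * M 2 2 - M 1 2 * M 2 1) * w 0 + ((M 0 2 * M 2 1 - M 0 1 * M 2 2) * w 1 + (M 0 1 * M 1 2 - M 0 2 * M 1 1) * w 2) := by
  rw [Matrix.adjugate_fin_three]
  simp [Matrix.mulVec, dotProduct, Fin.sum_univ_three]
  ring

lemma adjmul1 (M : Matrix (Fin 3) (Fin 3) ℝ) (w : Fin 3 → ℝ) :
    (Matrix.adjugate M).mulVec w 1 =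
      (M 1 2 * M 2 0 - M 1 0 * M 2 2) * w 0 + ((M 0 0 * M 2 2 - M 0 2 * M 2 0) * w 1 + (M 0 2 * M 1 0 - M 0 0 * M 1 2) * w 2) := by
  rw [Matrix.adjugate_fin_three]
  simp [Matrix.mulVec, dotProduct, Fin.sum_univ_three]
  ring

lemma adjmul2 (M : Matrix (Fin 3) (Fin 3) ℝ) (w : Fin 3 → ℝ) :
    (Matrix.adjugate M).mulVec w 2 =
      (M 1 0 * M 2 1 - M 1 1 * M 2 0) * w 0 + ((M 0 1 * M 2 0 - M 0 0 * M 2 1) * w 1 + (M 0 0 * M 1 1 - M 0 1 * M 1 0) * w 2) := by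
  rw [Matrix.adjugate_fin_three]
  simp [Matrix.mulVec, dotProduct, Fin.sum_univ_three]
  ring


set_option maxHeartbeats 4000000 in
/-- **Pullback of a 2-form by the backward flow map solves the Lie-advection
(induction) equation.**  `u` is a smooth, divergence-free velocity field on `ℝ³`,
invariant in `e₃` with vanishing third component, with backward characteristic
map `X t = X_{[t,0]}` (solving the transport equation, `X 0 = id`, smooth
jointly), and `B₀` is a smooth divergence-free field.  Then
`B(x,t) := adj(DX_{[t,0]}(x)) · B₀(X_{[t,0]}(x))` solves
`∂_t B + ∇×(B × u) = 0` with `B(·,0) = B₀`. -/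
theorem two_form_pullback_solves_induction
    (u : (Fin 3 → ℝ) → ℝ → (Fin 3 → ℝ))
    (hu_smooth : ContDiff ℝ (⊤ : ℕ∞) (fun p : (Fin 3 → ℝ) × ℝ => u p.1 p.2))
    (hu_div : ∀ x t, div3 (fun y => u y t) x = 0)
    (hu_planar : ∀ x t, u x t 2 = 0)
    (hu_inv : ∀ x t c, u (Function.update x 2 c) t = u x t)
    (B₀ : (Fin 3 → ℝ) → (Fin 3 → ℝ)) (hB₀ : ContDiff ℝ (⊤ : ℕ∞) B₀)
    (hB₀_div : ∀ x, div3 B₀ x = 0)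
    (X : ℝ → (Fin 3 → ℝ) → (Fin 3 → ℝ))
    (hX_smooth : ContDiff ℝ (⊤ : ℕ∞) (fun p : ℝ × (Fin 3 → ℝ) => X p.1 p.2))
    (hX_init : ∀ x, X 0 x = x)
    (hX_transport : ∀ x t,
      HasDerivAt (fun τ => X τ x) (-(fderiv ℝ (X t) x (u x t))) t)
    (B : ℝ → (Fin 3 → ℝ) → (Fin 3 → ℝ))
    (hB : ∀ t x, B t x = (Matrix.adjugate (jac3 (X t) x)).mulVec (B₀ (X t x))) :
    (∀ x t i, HasDerivAt (fun τ => B τ x i)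
        (-(curl3 (fun y => cross3 (B t y) (u y t)) x i)) t) ∧
    (∀ x, B 0 x = B₀ x) := by
  constructor
  · intro x t i
    -- smoothness packaging
    have hFkc : ∀ k : Fin 3, ContDiff ℝ (⊤ : ℕ∞) (Fk X k) := fun k =>
      (ContinuousLinearMap.proj k : ((Fin 3) → ℝ) →L[ℝ] ℝ).contDiff.comp hX_smooth
    have hXtc : ∀ s : ℝ, ContDiff ℝ (⊤ : ℕ∞) (X s) := fun s =>
      hX_smooth.comp (contDiff_const.prodMk contDiff_id)
    have hgc : ∀ (k l : Fin 3), ContDiff ℝ (⊤ : ℕ∞)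
        (fun p : ℝ × (Fin 3 → ℝ) => fderiv ℝ (Fk X k) p ((0:ℝ), Pi.single l 1)) := fun k l =>
      ((hFkc k).fderiv_right (m := (⊤ : ℕ∞)) (by simp)).clm_apply contDiff_const
    have hupc : ∀ m : Fin 3, ContDiff ℝ (⊤ : ℕ∞) (fun p : ℝ × (Fin 3 → ℝ) => u p.2 p.1 m) := fun m =>
      (ContinuousLinearMap.proj m : ((Fin 3) → ℝ) →L[ℝ] ℝ).contDiff.comp
        (hu_smooth.comp (contDiff_snd.prodMk contDiff_fst))
    have humc : ∀ m : Fin 3, ContDiff ℝ (⊤ : ℕ∞) (fun y => u y t m) := fun m =>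
      (ContinuousLinearMap.proj m : ((Fin 3) → ℝ) →L[ℝ] ℝ).contDiff.comp
        (hu_smooth.comp (contDiff_id.prodMk contDiff_const))
    have hB₀c : ∀ m : Fin 3, ContDiff ℝ (⊤ : ℕ∞) (fun y => B₀ y m) := fun m =>
      (ContinuousLinearMap.proj m : ((Fin 3) → ℝ) →L[ℝ] ℝ).contDiff.comp hB₀
    -- basic identities
    have hjacdef : ∀ (s : ℝ) (y : Fin 3 → ℝ) (k l : Fin 3),
        fderiv ℝ (fun y' => X s y' k) y (Pi.single l 1) = jac3 (X s) y k l := fun _ _ _ _ => rfl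
    have hjac : ∀ (s : ℝ) (y : Fin 3 → ℝ) (k l : Fin 3),
        jac3 (X s) y k l = fderiv ℝ (Fk X k) (s, y) ((0:ℝ), Pi.single l 1) := by
      intro s y k l
      exact fderiv_slice_right s y (Pi.single l 1) (((hFkc k).differentiable (by simp)) (s, y))
    have hproj : ∀ (s : ℝ) (y v : Fin 3 → ℝ) (k : Fin 3),
        fderiv ℝ (X s) y v k = fderiv ℝ (fun y' => X s y' k) y v := by
      intro s y v k
      have h1 : HasFDerivAt (fun y' => X s y' k)
          ((ContinuousLinearMap.proj k : ((Fin 3) → ℝ) →L[ℝ] ℝ).comp (fderiv ℝ (X s) y)) y :=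
        (ContinuousLinearMap.proj k : ((Fin 3) → ℝ) →L[ℝ] ℝ).hasFDerivAt.comp y
          (((hXtc s).differentiable (by simp) y).hasFDerivAt)
      rw [h1.fderiv]; rfl
    -- transport identity for Fk
    have htr : ∀ (p : ℝ × (Fin 3 → ℝ)) (k : Fin 3),
        fderiv ℝ (Fk X k) p ((1:ℝ), (0 : Fin 3 → ℝ)) =
          -∑ m, jac3 (X p.1) p.2 k m * u p.2 p.1 m := by
      intro p k
      have h1 : HasDerivAt (fun τ => Fk X k (τ, p.2))
          (fderiv ℝ (Fk X k) p ((1:ℝ), (0 : Fin 3 → ℝ))) p.1 := by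
        have hc : HasDerivAt (fun τ : ℝ => (τ, p.2)) ((1:ℝ), (0 : Fin 3 → ℝ)) p.1 :=
          (hasDerivAt_id p.1).prodMk (hasDerivAt_const p.1 p.2)
        have := (((hFkc k).differentiable (by simp)) p).hasFDerivAt.comp_hasDerivAt p.1 hc
        exact this
      have h2 : HasDerivAt (fun τ => X τ p.2 k)
          ((-(fderiv ℝ (X p.1) p.2 (u p.2 p.1))) k) p.1 :=
        (ContinuousLinearMap.proj k : ((Fin 3) → ℝ) →L[ℝ] ℝ).hasFDerivAt.comp_hasDerivAt p.1
          (hX_transport p.2 p.1)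
      have h3 := h1.unique h2
      rw [h3]
      simp only [Pi.neg_apply, neg_inj]
      rw [show fderiv ℝ (X p.1) p.2 (u p.2 p.1) k =
          (((ContinuousLinearMap.proj k : ((Fin 3) → ℝ) →L[ℝ] ℝ)).comp (fderiv ℝ (X p.1) p.2)) (u p.2 p.1) from rfl,
        clm_expand]
      refine Finset.sum_congr rfl (fun m _ => ?_)
      rw [show (((ContinuousLinearMap.proj k : ((Fin 3) → ℝ) →L[ℝ] ℝ)).comp (fderiv ℝ (X p.1) p.2)) (Pi.single m 1) =
          fderiv ℝ (X p.1) p.2 (Pi.single m 1) k from rfl, hproj, hjacdef]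
      ring
    -- time derivative of Jacobian entries
    have hMt : ∀ k l : Fin 3, HasDerivAt (fun τ => jac3 (X τ) x k l)
        (-∑ m, (fderiv ℝ (fun p => fderiv ℝ (Fk X k) p ((0:ℝ), Pi.single m 1)) (t, x)
                  ((0:ℝ), Pi.single l 1) * u x t m
          + jac3 (X t) x k m * fderiv ℝ (fun y => u y t m) x (Pi.single l 1))) t := by
      intro k l
      have h1 : HasDerivAt (fun τ => fderiv ℝ (Fk X k) (τ, x) ((0:ℝ), Pi.single l 1))
          (fderiv ℝ (fun p => fderiv ℝ (Fk X k) p ((0:ℝ), Pi.single l 1)) (t, x)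
            ((1:ℝ), (0 : Fin 3 → ℝ))) t := by
        have hc : HasDerivAt (fun τ : ℝ => (τ, x)) ((1:ℝ), (0 : Fin 3 → ℝ)) t :=
          (hasDerivAt_id t).prodMk (hasDerivAt_const t x)
        exact (((hgc k l).differentiable (by simp)) (t, x)).hasFDerivAt.comp_hasDerivAt t hc
      have h2 : fderiv ℝ (fun p => fderiv ℝ (Fk X k) p ((0:ℝ), Pi.single l 1)) (t, x)
            ((1:ℝ), (0 : Fin 3 → ℝ))
          = -∑ m, (fderiv ℝ (fun p => fderiv ℝ (Fk X k) p ((0:ℝ), Pi.single m 1)) (t, x)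
                  ((0:ℝ), Pi.single l 1) * u x t m
            + jac3 (X t) x k m * fderiv ℝ (fun y => u y t m) x (Pi.single l 1)) := by
        rw [fderiv_swap (hFkc k) (t, x) ((0:ℝ), Pi.single l 1) ((1:ℝ), (0 : Fin 3 → ℝ))]
        have hfe : (fun p : ℝ × (Fin 3 → ℝ) => fderiv ℝ (Fk X k) p ((1:ℝ), (0 : Fin 3 → ℝ)))
            = fun p => -∑ m, fderiv ℝ (Fk X k) p ((0:ℝ), Pi.single m 1) * u p.2 p.1 m := by
          funext p
          rw [htr p k]
          simp only [hjac, Prod.mk.eta]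
        rw [hfe]
        have hsum := HasFDerivAt.sum (fun (m : Fin 3) (_ : m ∈ Finset.univ) =>
          ((((hgc k m).differentiable (by simp)) (t, x)).hasFDerivAt.mul
            ((((hupc m).differentiable (by simp)) (t, x)).hasFDerivAt)))
        rw [(show
          fderiv ℝ (fun p : ℝ × (Fin 3 → ℝ) =>
            -∑ m : Fin 3, fderiv ℝ (Fk X k) p ((0:ℝ), Pi.single m 1) * u p.2 p.1 m) (t, x) = _ from (hsum.neg).fderiv)]
        have huslice : ∀ m : Fin 3, fderiv ℝ (fun p : ℝ × (Fin 3 → ℝ) => u p.2 p.1 m) (t, x)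
            ((0:ℝ), Pi.single l 1) = fderiv ℝ (fun y => u y t m) x (Pi.single l 1) := fun m =>
          (fderiv_slice_right t x (Pi.single l 1) (((hupc m).differentiable (by simp)) (t, x))).symm
        simp only [ContinuousLinearMap.neg_apply, ContinuousLinearMap.coe_sum',
          Finset.sum_apply, ContinuousLinearMap.add_apply, ContinuousLinearMap.smul_apply,
          smul_eq_mul, neg_inj]
        refine Finset.sum_congr rfl (fun m _ => ?_)
        rw [huslice m, ← hjac t x k m]
        ring
      exact h2 ▸ (h1.congr_of_eventuallyEq
        (Filter.Eventually.of_forall (fun τ => hjac τ x k l)))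
    -- time derivative of B₀ ∘ X
    have hbt : ∀ j : Fin 3, HasDerivAt (fun τ => B₀ (X τ x) j)
        (-∑ m, fderiv ℝ (fun y => B₀ y j) (X t x) (Pi.single m 1)
            * (∑ l, jac3 (X t) x m l * u x t l)) t := by
      intro j
      have h := (((hB₀c j).differentiable (by simp)) (X t x)).hasFDerivAt.comp_hasDerivAt t
        (hX_transport x t)
      have hval : fderiv ℝ (fun y => B₀ y j) (X t x) (-(fderiv ℝ (X t) x (u x t)))
          = -∑ m, fderiv ℝ (fun y => B₀ y j) (X t x) (Pi.single m 1)
            * (∑ l, jac3 (X t) x m l * u x t l) := by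
        rw [map_neg, clm_expand (fderiv ℝ (fun y => B₀ y j) (X t x)) (fderiv ℝ (X t) x (u x t))]
        have hcomp : ∀ m : Fin 3, fderiv ℝ (X t) x (u x t) m
            = ∑ l, u x t l * jac3 (X t) x m l := by
          intro m
          rw [hproj t x (u x t) m, clm_expand (fderiv ℝ (fun y' => X t y' m) x) (u x t)]
          simp only [hjacdef]
        simp only [hcomp]
        simp only [Fin.sum_univ_three]
        ring
      rw [hval] at h
      exact h
    -- spatial derivatives
    have hMx : ∀ k l : Fin 3, HasFDerivAt (fun y => jac3 (X t) y k l)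
        ((fderiv ℝ (fun p => fderiv ℝ (Fk X k) p ((0:ℝ), Pi.single l 1)) (t, x)).comp
          ((0 : (Fin 3 → ℝ) →L[ℝ] ℝ).prod (ContinuousLinearMap.id ℝ (Fin 3 → ℝ)))) x := by
      intro k l
      have h := (((hgc k l).differentiable (by simp)) (t, x)).hasFDerivAt.comp x
        (HasFDerivAt.prodMk (hasFDerivAt_const t x) (hasFDerivAt_id x))
      exact h.congr_of_eventuallyEq (Filter.Eventually.of_forall (fun y => hjac t y k l))
    have hbx : ∀ m : Fin 3, HasFDerivAt (fun y => B₀ (X t y) m)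
        ((fderiv ℝ (fun y => B₀ y m) (X t x)).comp (fderiv ℝ (X t) x)) x := fun m =>
      (((hB₀c m).differentiable (by simp)) (X t x)).hasFDerivAt.comp x
        (((hXtc t).differentiable (by simp) x).hasFDerivAt)
    have hux : ∀ m : Fin 3, HasFDerivAt (fun y => u y t m)
        (fderiv ℝ (fun y => u y t m) x) x := fun m =>
      (((humc m).differentiable (by simp)) x).hasFDerivAt
    have hbxeval : ∀ (m j : Fin 3),
        (fderiv ℝ (fun y => B₀ y m) (X t x)) ((fderiv ℝ (X t) x) (Pi.single j 1))
          = ∑ l, jac3 (X t) x l j * fderiv ℝ (fun y => B₀ y m) (X t x) (Pi.single l 1) := by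
      intro m j
      rw [clm_expand]
      refine Finset.sum_congr rfl (fun l _ => ?_)
      rw [hproj t x (Pi.single j 1) l, hjacdef]
    -- symmetry of second derivatives
    have hNs : ∀ (k l j : Fin 3),
        fderiv ℝ (fun p => fderiv ℝ (Fk X k) p ((0:ℝ), Pi.single l 1)) (t, x)
            ((0:ℝ), Pi.single j 1)
        = fderiv ℝ (fun p => fderiv ℝ (Fk X k) p ((0:ℝ), Pi.single j 1)) (t, x)
            ((0:ℝ), Pi.single l 1) := fun k l j =>
      fderiv_swap (hFkc k) (t, x) ((0:ℝ), Pi.single l 1) ((0:ℝ), Pi.single j 1)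
    have hN10 := fun k => hNs k 1 0
    have hN20 := fun k => hNs k 2 0
    have hN21 := fun k => hNs k 2 1
    -- trace conditions
    have hVt : fderiv ℝ (fun y => u y t 2) x (Pi.single 2 1)
        = -fderiv ℝ (fun y => u y t 0) x (Pi.single 0 1)
          - fderiv ℝ (fun y => u y t 1) x (Pi.single 1 1) := by
      have := hu_div x t
      simp only [div3, pd3, Fin.sum_univ_three] at this
      linarith
    have hct : fderiv ℝ (fun y => B₀ y 2) (X t x) (Pi.single 2 1)
        = -fderiv ℝ (fun y => B₀ y 0) (X t x) (Pi.single 0 1)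
          - fderiv ℝ (fun y => B₀ y 1) (X t x) (Pi.single 1 1) := by
      have := hB₀_div (X t x)
      simp only [div3, pd3, Fin.sum_univ_three] at this
      linarith
    have heqB0 : (fun y => B t y 0) =ᶠ[nhds x] (fun y =>
        (jac3 (X t) y 1 1 * jac3 (X t) y 2 2 - jac3 (X t) y 1 2 * jac3 (X t) y 2 1) * B₀ (X t y) 0 + ((jac3 (X t) y 0 2 * jac3 (X t) y 2 1 - jac3 (X t) y 0 1 * jac3 (X t) y 2 2) * B₀ (X t y) 1 + (jac3 (X t) y 0 1 * jac3 (X t) y 1 2 - jac3 (X t) y 0 2 * jac3 (X t) y 1 1) * B₀ (X t y) 2)) :=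
      Filter.Eventually.of_forall (fun y => by simp only [hB, adjmul0])
    have hBF0 := HasFDerivAt.congr_of_eventuallyEq (((((hMx 1 1).mul (hMx 2 2)).sub ((hMx 1 2).mul (hMx 2 1))).mul (hbx 0)).add ((((((hMx 0 2).mul (hMx 2 1)).sub ((hMx 0 1).mul (hMx 2 2)))).mul (hbx 1)).add (((((hMx 0 1).mul (hMx 1 2)).sub ((hMx 0 2).mul (hMx 1 1)))).mul (hbx 2)))) heqB0
    have heqB1 : (fun y => B t y 1) =ᶠ[nhds x] (fun y =>
        (jac3 (X t) y 1 2 * jac3 (X t) y 2 0 - jac3 (X t) y 1 0 * jac3 (X t) y 2 2) * B₀ (X t y) 0 + ((jac3 (X t) y 0 0 * jac3 (X t) y 2 2 - jac3 (X t) y 0 2 * jac3 (X t) y 2 0) * B₀ (X t y) 1 + (jac3 (X t) y 0 2 * jac3 (X t) y 1 0 - jac3 (X t) y 0 0 * jac3 (X t) y 1 2) * B₀ (X t y) 2)) :=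
      Filter.Eventually.of_forall (fun y => by simp only [hB, adjmul1])
    have hBF1 := HasFDerivAt.congr_of_eventuallyEq (((((hMx 1 2).mul (hMx 2 0)).sub ((hMx 1 0).mul (hMx 2 2))).mul (hbx 0)).add ((((((hMx 0 0).mul (hMx 2 2)).sub ((hMx 0 2).mul (hMx 2 0)))).mul (hbx 1)).add (((((hMx 0 2).mul (hMx 1 0)).sub ((hMx 0 0).mul (hMx 1 2)))).mul (hbx 2)))) heqB1
    have heqB2 : (fun y => B t y 2) =ᶠ[nhds x] (fun y =>
        (jac3 (X t) y 1 0 * jac3 (X t) y 2 1 - jac3 (X t) y 1 1 * jac3 (X t) y 2 0) * B₀ (X t y) 0 + ((jac3 (X t) y 0 1 * jac3 (X t) y 2 0 - jac3 (X t) y 0 0 * jac3 (X t) y 2 1) * B₀ (X t y) 1 + (jac3 (X t) y 0 0 * jac3 (X t) y 1 1 - jac3 (X t) y 0 1 * jac3 (X t) y 1 0) * B₀ (X t y) 2)) :=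
      Filter.Eventually.of_forall (fun y => by simp only [hB, adjmul2])
    have hBF2 := HasFDerivAt.congr_of_eventuallyEq (((((hMx 1 0).mul (hMx 2 1)).sub ((hMx 1 1).mul (hMx 2 0))).mul (hbx 0)).add ((((((hMx 0 1).mul (hMx 2 0)).sub ((hMx 0 0).mul (hMx 2 1)))).mul (hbx 1)).add (((((hMx 0 0).mul (hMx 1 1)).sub ((hMx 0 1).mul (hMx 1 0)))).mul (hbx 2)))) heqB2
    have hC0 := (hBF1.mul (hux 2)).sub (hBF2.mul (hux 1))
    have hC1 := (hBF2.mul (hux 0)).sub (hBF0.mul (hux 2))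
    have hC2 := (hBF0.mul (hux 1)).sub (hBF1.mul (hux 0))
    fin_cases i
    · -- component 0
      show HasDerivAt (fun τ => B τ x 0) (-(curl3 (fun y => cross3 (B t y) (u y t)) x 0)) t
      have heqT : (fun τ => B τ x 0) =ᶠ[nhds t] (fun τ =>
          (jac3 (X τ) x 1 1 * jac3 (X τ) x 2 2 - jac3 (X τ) x 1 2 * jac3 (X τ) x 2 1) * B₀ (X τ x) 0 + ((jac3 (X τ) x 0 2 * jac3 (X τ) x 2 1 - jac3 (X τ) x 0 1 * jac3 (X τ) x 2 2) * B₀ (X τ x) 1 + (jac3 (X τ) x 0 1 * jac3 (X τ) x 1 2 - jac3 (X τ) x 0 2 * jac3 (X τ) x 1 1) * B₀ (X τ x) 2)) :=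
        Filter.Eventually.of_forall (fun τ => by simp only [hB, adjmul0])
      have H := HasDerivAt.congr_of_eventuallyEq (((((hMt 1 1).mul (hMt 2 2)).sub ((hMt 1 2).mul (hMt 2 1))).mul (hbt 0)).add ((((((hMt 0 2).mul (hMt 2 1)).sub ((hMt 0 1).mul (hMt 2 2)))).mul (hbt 1)).add (((((hMt 0 1).mul (hMt 1 2)).sub ((hMt 0 2).mul (hMt 1 1)))).mul (hbt 2)))) heqT
      refine H.congr_deriv ?_
      rw [show (curl3 (fun y => cross3 (B t y) (u y t)) x 0) =
          fderiv ℝ (fun y => B t y 0 * u y t 1 - B t y 1 * u y t 0) x (Pi.single 1 1)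
          - fderiv ℝ (fun y => B t y 2 * u y t 0 - B t y 0 * u y t 2) x (Pi.single 2 1) from rfl]
      rw [(show fderiv ℝ (fun y => B t y 0 * u y t 1 - B t y 1 * u y t 0) x = _ from hC2.fderiv),
          (show fderiv ℝ (fun y => B t y 2 * u y t 0 - B t y 0 * u y t 2) x = _ from hC1.fderiv)]
      simp only [ContinuousLinearMap.sub_apply, ContinuousLinearMap.add_apply,
        ContinuousLinearMap.smul_apply, ContinuousLinearMap.comp_apply,
        ContinuousLinearMap.prod_apply, ContinuousLinearMap.zero_apply,
        ContinuousLinearMap.id_apply, smul_eq_mul, Pi.mul_apply, Pi.sub_apply, Pi.add_apply]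
      simp only [hbxeval]
      simp only [hB, adjmul0, adjmul1, adjmul2]
      simp only [Fin.sum_univ_three]
      simp only [hN10, hN20, hN21, hVt, hct]
      ring
    · -- component 1
      show HasDerivAt (fun τ => B τ x 1) (-(curl3 (fun y => cross3 (B t y) (u y t)) x 1)) t
      have heqT : (fun τ => B τ x 1) =ᶠ[nhds t] (fun τ =>
          (jac3 (X τ) x 1 2 * jac3 (X τ) x 2 0 - jac3 (X τ) x 1 0 * jac3 (X τ) x 2 2) * B₀ (X τ x) 0 + ((jac3 (X τ) x 0 0 * jac3 (X τ) x 2 2 - jac3 (X τ) x 0 2 * jac3 (X τ) x 2 0) * B₀ (X τ x) 1 + (jac3 (X τ) x 0 2 * jac3 (X τ) x 1 0 - jac3 (X τ) x 0 0 * jac3 (X τ) x 1 2) * B₀ (X τ x) 2)) :=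
        Filter.Eventually.of_forall (fun τ => by simp only [hB, adjmul1])
      have H := HasDerivAt.congr_of_eventuallyEq (((((hMt 1 2).mul (hMt 2 0)).sub ((hMt 1 0).mul (hMt 2 2))).mul (hbt 0)).add ((((((hMt 0 0).mul (hMt 2 2)).sub ((hMt 0 2).mul (hMt 2 0)))).mul (hbt 1)).add (((((hMt 0 2).mul (hMt 1 0)).sub ((hMt 0 0).mul (hMt 1 2)))).mul (hbt 2)))) heqT
      refine H.congr_deriv ?_
      rw [show (curl3 (fun y => cross3 (B t y) (u y t)) x 1) =
          fderiv ℝ (fun y => B t y 1 * u y t 2 - B t y 2 * u y t 1) x (Pi.single 2 1)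
          - fderiv ℝ (fun y => B t y 0 * u y t 1 - B t y 1 * u y t 0) x (Pi.single 0 1) from rfl]
      rw [(show fderiv ℝ (fun y => B t y 1 * u y t 2 - B t y 2 * u y t 1) x = _ from hC0.fderiv),
          (show fderiv ℝ (fun y => B t y 0 * u y t 1 - B t y 1 * u y t 0) x = _ from hC2.fderiv)]
      simp only [ContinuousLinearMap.sub_apply, ContinuousLinearMap.add_apply,
        ContinuousLinearMap.smul_apply, ContinuousLinearMap.comp_apply,
        ContinuousLinearMap.prod_apply, ContinuousLinearMap.zero_apply,
        ContinuousLinearMap.id_apply, smul_eq_mul, Pi.mul_apply, Pi.sub_apply, Pi.add_apply]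
      simp only [hbxeval]
      simp only [hB, adjmul0, adjmul1, adjmul2]
      simp only [Fin.sum_univ_three]
      simp only [hN10, hN20, hN21, hVt, hct]
      ring
    · -- component 2
      show HasDerivAt (fun τ => B τ x 2) (-(curl3 (fun y => cross3 (B t y) (u y t)) x 2)) t
      have heqT : (fun τ => B τ x 2) =ᶠ[nhds t] (fun τ =>
          (jac3 (X τ) x 1 0 * jac3 (X τ) x 2 1 - jac3 (X τ) x 1 1 * jac3 (X τ) x 2 0) * B₀ (X τ x) 0 + ((jac3 (X τ) x 0 1 * jac3 (X τ) x 2 0 - jac3 (X τ) x 0 0 * jac3 (X τ) x 2 1) * B₀ (X τ x) 1 + (jac3 (X τ) x 0 0 * jac3 (X τ) x 1 1 - jac3 (X τ) x 0 1 * jac3 (X τ) x 1 0) * B₀ (X τ x) 2)) :=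
        Filter.Eventually.of_forall (fun τ => by simp only [hB, adjmul2])
      have H := HasDerivAt.congr_of_eventuallyEq (((((hMt 1 0).mul (hMt 2 1)).sub ((hMt 1 1).mul (hMt 2 0))).mul (hbt 0)).add ((((((hMt 0 1).mul (hMt 2 0)).sub ((hMt 0 0).mul (hMt 2 1)))).mul (hbt 1)).add (((((hMt 0 0).mul (hMt 1 1)).sub ((hMt 0 1).mul (hMt 1 0)))).mul (hbt 2)))) heqT
      refine H.congr_deriv ?_
      rw [show (curl3 (fun y => cross3 (B t y) (u y t)) x 2) =
          fderiv ℝ (fun y => B t y 2 * u y t 0 - B t y 0 * u y t 2) x (Pi.single 0 1)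
          - fderiv ℝ (fun y => B t y 1 * u y t 2 - B t y 2 * u y t 1) x (Pi.single 1 1) from rfl]
      rw [(show fderiv ℝ (fun y => B t y 2 * u y t 0 - B t y 0 * u y t 2) x = _ from hC1.fderiv),
          (show fderiv ℝ (fun y => B t y 1 * u y t 2 - B t y 2 * u y t 1) x = _ from hC0.fderiv)]
      simp only [ContinuousLinearMap.sub_apply, ContinuousLinearMap.add_apply,
        ContinuousLinearMap.smul_apply, ContinuousLinearMap.comp_apply,
        ContinuousLinearMap.prod_apply, ContinuousLinearMap.zero_apply,
        ContinuousLinearMap.id_apply, smul_eq_mul, Pi.mul_apply, Pi.sub_apply, Pi.add_apply]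
      simp only [hbxeval]
      simp only [hB, adjmul0, adjmul1, adjmul2]
      simp only [Fin.sum_univ_three]
      simp only [hN10, hN20, hN21, hVt, hct]
      ring
  · -- initial condition
    intro x
    have hj : jac3 (X 0) x = 1 := by
      ext k l
      show fderiv ℝ (fun y => X 0 y k) x (Pi.single l 1) = (1 : Matrix (Fin 3) (Fin 3) ℝ) k l
      have he : (fun y : Fin 3 → ℝ => X 0 y k) = fun y => y k := by
        funext y; rw [hX_init]
      rw [he]
      rw [show fderiv ℝ (fun y : Fin 3 → ℝ => y k) x
          = (ContinuousLinearMap.proj k : ((Fin 3) → ℝ) →L[ℝ] ℝ) from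
        (ContinuousLinearMap.proj k :
          ((Fin 3) → ℝ) →L[ℝ] ℝ).hasFDerivAt.fderiv]
      simp [Pi.single_apply, Matrix.one_apply, eq_comm]
    rw [hB, hj, Matrix.adjugate_one, hX_init]
    simp
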